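/- arXiv:0910.2113 — 5 statements merged into one kernel-verified Lean document; each statement's English description precedes it below -/
import Mathlib

section
/- In an atomic selfish routing instance with pricing in which every congestion cost is affine, the function Φ is a weighted potential: for every strategy profile P, every player i, and every alternative path Q ∈ Π_i, one has Φ(P[i↦Q]) − Φ(P) = 2·r_i·( t_i(P[i↦Q]) − t_i(P) ), where P[i↦Q] is the profile agreeing with P except that player i uses path Q. -/
/-!
Atomic selfish routing with pricing.  Edges form a finite type `E`; there are `k`
players, player `i` has demand `r i > 0` and a finite nonempty set `Paths i` of paths
(finite subsets of `E`).  Edge `e` has affine congestion cost `c_e(x) = a e * x + b e`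
and per-unit price function `u e : ℝ → ℝ`.
-/

open Finset

/-- The flow on edge `e` under profile `P`: the sum of the demands of the players
whose chosen path contains `e`. -/
noncomputable def edgeFlow {E : Type*} [Fintype E] [DecidableEq E] {k : ℕ}
    (r : Fin k → ℝ) (P : Fin k → Finset E) (e : E) : ℝ :=
  ∑ i, if e ∈ P i then r i else 0

/-- The per-unit cost to player `i` under profile `P`:
`t_i(P) = Σ_{e ∈ P_i} ( c_e(f_e(P)) + u_e(r_i) )` with `c_e(x) = a e * x + b e`. -/
noncomputable def playerCost {E : Type*} [Fintype E] [DecidableEq E] {k : ℕ}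
    (a b : E → ℝ) (u : E → ℝ → ℝ) (r : Fin k → ℝ) (P : Fin k → Finset E) (i : Fin k) : ℝ :=
  ∑ e ∈ P i, (a e * edgeFlow r P e + b e + u e (r i))

/-- The potential function
`Φ(P) = Σ_{e∈E} ( c_e(f_e(P))·f_e(P) + Σ_{i : e∈P_i} c_e(r_i)·r_i )
        + 2·Σ_{i=1}^k Σ_{e∈P_i} u_e(r_i)·r_i`. -/
noncomputable def potential {E : Type*} [Fintype E] [DecidableEq E] {k : ℕ}
    (a b : E → ℝ) (u : E → ℝ → ℝ) (r : Fin k → ℝ) (P : Fin k → Finset E) : ℝ :=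
  (∑ e, ((a e * edgeFlow r P e + b e) * edgeFlow r P e
      + ∑ i, if e ∈ P i then (a e * r i + b e) * r i else 0))
    + 2 * ∑ i, ∑ e ∈ P i, u e (r i) * r i

/-!
Moving player `i` from `P i` to `Q` changes the flow on edge `e` by `r i (1_Q e − 1_{P i} e)`
and, apart from these flows, touches only player `i`'s own terms of `Φ`. Both sides of the
identity are therefore sums of per-edge contributions, and these agree edge by edge: on an
edge that `i` enters, `Φ` changes by `c_e(F + r)(F + r) − c_e(F) F + c_e(r) r + 2 u_e(r) r`,
which for affine `c_e` is `2 r (c_e(F + r) + u_e(r))`. The self-interaction term `c_e(r_i) r_i`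
of `Φ` supplies the missing `a_e r_i²`; on an edge that `i` leaves, it cancels the `a_e r_i²`
of `c_e(F − r)(F − r)`.
-/

theorem Fintype.sum_apply_update {ι α M : Type*} [Fintype ι] [DecidableEq ι] [AddCommGroup M]
    (g : ι → α → M) (P : ι → α) (i : ι) (x : α) :
    ∑ j, g j (Function.update P i x j) = ∑ j, g j (P j) + (g i x - g i (P i)) := by
  simp_rw [Function.apply_update g P i x]
  rw [sum_update_of_mem (mem_univ i), sum_eq_add_sum_sdiff_singleton_of_mem (mem_univ i)]
  abel

theorem affine_weighted_potential_edge (a b u F r S : ℝ) (p q : Prop) [Decidable p]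
    [Decidable q] :
    (a * (F + ((if q then r else 0) - if p then r else 0)) + b)
        * (F + ((if q then r else 0) - if p then r else 0))
      + (S + ((if q then (a * r + b) * r + 2 * u * r else 0)
        - if p then (a * r + b) * r + 2 * u * r else 0))
      - ((a * F + b) * F + S)
    = 2 * r * ((if q then a * (F + ((if q then r else 0) - if p then r else 0)) + b + u else 0)
      - if p then a * F + b + u else 0) := by
  split_ifs <;> ring

section Routing

variable {E : Type*} [Fintype E] [DecidableEq E] {k : ℕ}
  (a b : E → ℝ) (u : E → ℝ → ℝ) (r : Fin k → ℝ) (P : Fin k → Finset E)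

theorem edgeFlow_update (i : Fin k) (Q : Finset E) (e : E) :
    edgeFlow r (Function.update P i Q) e
      = edgeFlow r P e + ((if e ∈ Q then r i else 0) - if e ∈ P i then r i else 0) :=
  Fintype.sum_apply_update (fun j S => if e ∈ S then r j else 0) P i Q

theorem potential_eq_sum_edge :
    potential a b u r P = ∑ e, ((a e * edgeFlow r P e + b e) * edgeFlow r P e
      + ∑ j, if e ∈ P j then (a e * r j + b e) * r j + 2 * u e (r j) * r j else 0) := by
  have h_price : ∑ j, ∑ e ∈ P j, u e (r j) * r j
      = ∑ e, ∑ j, if e ∈ P j then u e (r j) * r j else 0 := by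
    simp_rw [← Fintype.sum_ite_mem (P _)]
    exact sum_comm
  rw [potential, h_price, mul_sum, ← sum_add_distrib]
  refine sum_congr rfl fun e _ => ?_
  rw [add_assoc, mul_sum, ← sum_add_distrib]
  congr 1
  refine sum_congr rfl fun j _ => ?_
  split_ifs <;> ring

theorem playerCost_eq_sum_edge (i : Fin k) :
    playerCost a b u r P i
      = ∑ e, if e ∈ P i then a e * edgeFlow r P e + b e + u e (r i) else 0 :=
  (Fintype.sum_ite_mem _ _).symm

end Routing

theorem potential_is_weighted_potential_general {E : Type*} [Fintype E] [DecidableEq E] {k : ℕ}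
    (a b : E → ℝ) (u : E → ℝ → ℝ) (r : Fin k → ℝ)
    (P : Fin k → Finset E)
    (i : Fin k) (Q : Finset E) :
    potential a b u r (Function.update P i Q) - potential a b u r P
      = 2 * r i *
        (playerCost a b u r (Function.update P i Q) i - playerCost a b u r P i) := by
  rw [potential_eq_sum_edge, potential_eq_sum_edge, playerCost_eq_sum_edge,
    playerCost_eq_sum_edge, ← sum_sub_distrib, ← sum_sub_distrib, mul_sum]
  refine sum_congr rfl fun e _ => ?_
  rw [edgeFlow_update, Fintype.sum_apply_update (fun j S => if e ∈ S then _ else 0),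
    Function.update_self]
  exact affine_weighted_potential_edge _ _ _ _ _ _ _ _

/-- `Φ` is a weighted potential: for every strategy profile `P`, every player `i`, and
every alternative path `Q ∈ Paths_i`,
`Φ(P[i↦Q]) − Φ(P) = 2·r_i·( t_i(P[i↦Q]) − t_i(P) )`. -/
theorem potential_is_weighted_potential {E : Type*} [Fintype E] [DecidableEq E] {k : ℕ}
    (a b : E → ℝ) (u : E → ℝ → ℝ) (r : Fin k → ℝ) (hr : ∀ i, 0 < r i)
    (Paths : Fin k → Finset (Finset E)) (hPaths : ∀ i, (Paths i).Nonempty)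
    (P : Fin k → Finset E) (hP : ∀ i, P i ∈ Paths i)
    (i : Fin k) (Q : Finset E) (hQ : Q ∈ Paths i) :
    potential a b u r (Function.update P i Q) - potential a b u r P
      = 2 * r i *
        (playerCost a b u r (Function.update P i Q) i - playerCost a b u r P i) :=
  potential_is_weighted_potential_general a b u r P i Q
end

section
/- In an atomic selfish routing instance with pricing in which every congestion cost is affine and every demand r_i is strictly positive, any strategy profile P that minimizes the potential function Φ over the (finite) set of all strategy profiles is an equilibrium. -/
/-!
Atomic selfish routing with pricing.  Edges form a finite type `E`; there are `k`
players, player `i` has demand `r i > 0` and a finite nonempty set `Paths i` of paths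
(finite subsets of `E`).  Edge `e` has affine congestion cost `c_e(x) = a e * x + b e`
and per-unit price function `u e : ℝ → ℝ`.
-/

open Finset

/-- A profile `P` is an equilibrium if no player can decrease its per-unit cost by
unilaterally switching to another available path. -/
def IsEquilibrium {E : Type*} [Fintype E] [DecidableEq E] {k : ℕ}
    (a b : E → ℝ) (u : E → ℝ → ℝ) (r : Fin k → ℝ)
    (Paths : Fin k → Finset (Finset E)) (P : Fin k → Finset E) : Prop :=
  ∀ i : Fin k, ∀ Q ∈ Paths i,
    playerCost a b u r P i ≤ playerCost a b u r (Function.update P i Q) i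

/- Removing player `i` from the profile lowers `Φ` by exactly `2 r_i t_i(P)`:
for an affine cost, `c(f + r)(f + r) + c(r) r - c(f) f = 2 r c(f + r)` on each edge of `P_i`.
Since the profile with player `i` removed does not depend on `P_i`, a unilateral deviation of
player `i` changes `Φ` by `2 r_i` times the change of `t_i`, and `r_i > 0`. -/

theorem Fintype.sum_apply_update_add {ι α M : Type*} [Fintype ι] [DecidableEq ι]
    [AddCommMonoid M] (g : ι → α → M) (P : ι → α) (i : ι) (S : α) :
    ∑ j, g j (Function.update P i S j) + g i (P i) = ∑ j, g j (P j) + g i S := by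
  simp_rw [Function.apply_update, Finset.sum_update_of_mem (mem_univ i),
    Finset.sum_eq_add_sum_sdiff_singleton_of_mem (mem_univ i) (fun j => g j (P j))]
  abel

theorem sum_ite_mem_update_empty_add {ι α M : Type*} [Fintype ι] [DecidableEq ι]
    [DecidableEq α] [AddCommMonoid M] (w : ι → M) (P : ι → Finset α) (i : ι) (x : α) :
    (∑ j, if x ∈ P j then w j else 0)
      = (∑ j, if x ∈ Function.update P i ∅ j then w j else 0) + if x ∈ P i then w i else 0 := by
  simpa using (Fintype.sum_apply_update_add (fun j (S : Finset α) => if x ∈ S then w j else 0)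
    P i ∅).symm

section Routing

variable {E : Type*} [Fintype E] [DecidableEq E] {k : ℕ}

theorem edgeFlow_eq_update_empty_add (r : Fin k → ℝ) (P : Fin k → Finset E) (i : Fin k)
    (e : E) :
    edgeFlow r P e = edgeFlow r (Function.update P i ∅) e + if e ∈ P i then r i else 0 :=
  sum_ite_mem_update_empty_add r P i e

theorem potential_eq_update_empty_add_playerCost (a b : E → ℝ) (u : E → ℝ → ℝ)
    (r : Fin k → ℝ) (P : Fin k → Finset E) (i : Fin k) :
    potential a b u r P
      = potential a b u r (Function.update P i ∅) + 2 * r i * playerCost a b u r P i := by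
  set P₀ := Function.update P i ∅
  have hedge : ∀ e, (a e * edgeFlow r P e + b e) * edgeFlow r P e
        + (∑ j, if e ∈ P j then (a e * r j + b e) * r j else 0)
      = ((a e * edgeFlow r P₀ e + b e) * edgeFlow r P₀ e
          + ∑ j, if e ∈ P₀ j then (a e * r j + b e) * r j else 0)
        + if e ∈ P i then 2 * r i * (a e * edgeFlow r P e + b e) else 0 := by
    intro e
    rw [edgeFlow_eq_update_empty_add r P i e,
      sum_ite_mem_update_empty_add (fun j => (a e * r j + b e) * r j) P i e]
    split_ifs <;> ring
  have hprice : ∑ j, ∑ e ∈ P j, u e (r j) * r j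
      = ∑ j, ∑ e ∈ P₀ j, u e (r j) * r j + ∑ e ∈ P i, u e (r i) * r i := by
    simpa using (Fintype.sum_apply_update_add (fun j (S : Finset E) => ∑ e ∈ S, u e (r j) * r j)
      P i ∅).symm
  have hcost : 2 * r i * playerCost a b u r P i
      = ∑ e ∈ P i, 2 * r i * (a e * edgeFlow r P e + b e) + 2 * ∑ e ∈ P i, u e (r i) * r i := by
    rw [playerCost, mul_sum, mul_sum, ← sum_add_distrib]
    exact sum_congr rfl fun e _ => by ring
  rw [potential, potential, sum_congr rfl fun e _ => hedge e, sum_add_distrib, sum_ite_mem,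
    univ_inter, hprice, hcost]
  ring

theorem potential_update_sub (a b : E → ℝ) (u : E → ℝ → ℝ) (r : Fin k → ℝ)
    (P : Fin k → Finset E) (i : Fin k) (Q : Finset E) :
    potential a b u r (Function.update P i Q) - potential a b u r P
      = 2 * r i * (playerCost a b u r (Function.update P i Q) i - playerCost a b u r P i) := by
  rw [potential_eq_update_empty_add_playerCost a b u r P i,
    potential_eq_update_empty_add_playerCost a b u r (Function.update P i Q) i,
    Function.update_idem]
  ring

end Routing

theorem potential_minimizer_isEquilibrium_general {E : Type*} [Fintype E] [DecidableEq E] {k : ℕ}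
    (a b : E → ℝ) (u : E → ℝ → ℝ) (r : Fin k → ℝ) (hr : ∀ i, 0 < r i)
    (Paths : Fin k → Finset (Finset E)) (P : Fin k → Finset E) (hP : ∀ i, P i ∈ Paths i)
    (hmin : ∀ P' : Fin k → Finset E, (∀ i, P' i ∈ Paths i) →
      potential a b u r P ≤ potential a b u r P') :
    IsEquilibrium a b u r Paths P := by
  intro i Q hQ
  have hQP : ∀ j, Function.update P i Q j ∈ Paths j :=
    Function.forall_update_iff P (p := fun j S => S ∈ Paths j) |>.2 ⟨hQ, fun j _ => hP j⟩
  have hΔ : 0 ≤ 2 * r i * (playerCost a b u r (Function.update P i Q) i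
      - playerCost a b u r P i) := by
    rw [← potential_update_sub]
    exact sub_nonneg.2 (hmin _ hQP)
  exact sub_nonneg.1 (nonneg_of_mul_nonneg_right hΔ (mul_pos two_pos (hr i)))

/-- Any strategy profile minimizing the potential `Φ` over all strategy profiles is an
equilibrium, provided every congestion cost is affine and every demand is positive. -/
theorem potential_minimizer_isEquilibrium {E : Type*} [Fintype E] [DecidableEq E] {k : ℕ}
    (a b : E → ℝ) (u : E → ℝ → ℝ) (r : Fin k → ℝ) (hr : ∀ i, 0 < r i)
    (Paths : Fin k → Finset (Finset E)) (hPaths : ∀ i, (Paths i).Nonempty)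
    (P : Fin k → Finset E) (hP : ∀ i, P i ∈ Paths i)
    (hmin : ∀ P' : Fin k → Finset E, (∀ i, P' i ∈ Paths i) →
      potential a b u r P ≤ potential a b u r P') :
    IsEquilibrium a b u r Paths P :=
  potential_minimizer_isEquilibrium_general a b u r hr Paths P hP hmin
end

section
/- For every real u with 0 ≤ u ≤ 1, the Braess cost ratio in the new network satisfies (1 + u) / ( 1 + (1/2 + u)/2 ) = (4 + 4u) / (5 + 2u), and this quantity is at most 8/7, with equality exactly when u = 1. Consequently the worst-case Braess ratio in the new pricing model is 8/7. -/
theorem braess_ratio_eq_div (u : ℝ) :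
    (1 + u) / (1 + (1 / 2 + u) / 2) = (4 + 4 * u) / (5 + 2 * u) := by
  rw [show 1 + (1 / 2 + u) / 2 = (5 + 2 * u) / 4 by ring, div_div_eq_mul_div]
  ring

theorem div_le_eight_sevenths_iff {u : ℝ} (hu : -(5 / 2) < u) :
    (4 + 4 * u) / (5 + 2 * u) ≤ 8 / 7 ↔ u ≤ 1 := by
  rw [div_le_div_iff₀ (by linarith) (by norm_num)]
  constructor <;> intro h <;> linarith

theorem div_eq_eight_sevenths_iff (u : ℝ) :
    (4 + 4 * u) / (5 + 2 * u) = 8 / 7 ↔ u = 1 := by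
  by_cases hden : 5 + 2 * u = 0
  · have hu : u ≠ 1 := by rintro rfl; norm_num at hden
    simp only [hden, div_zero, hu, iff_false]
    norm_num
  · rw [div_eq_div_iff hden (by norm_num)]
    constructor <;> intro h <;> linarith

/-- For every real `u` with `0 ≤ u ≤ 1`, the Braess cost ratio in the new network
satisfies `(1 + u) / (1 + (1/2 + u)/2) = (4 + 4u)/(5 + 2u)`, this quantity is at most
`8/7`, and it equals `8/7` exactly when `u = 1`; hence the worst-case Braess ratio in
the new pricing model is `8/7`. -/
theorem braess_ratio_new_network (u : ℝ) (hu0 : 0 ≤ u) (hu1 : u ≤ 1) :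
    (1 + u) / (1 + (1 / 2 + u) / 2) = (4 + 4 * u) / (5 + 2 * u) ∧
    (1 + u) / (1 + (1 / 2 + u) / 2) ≤ 8 / 7 ∧
    ((1 + u) / (1 + (1 / 2 + u) / 2) = 8 / 7 ↔ u = 1) := by
  rw [braess_ratio_eq_div]
  exact ⟨rfl, (div_le_eight_sevenths_iff (by linarith)).2 hu1, div_eq_eight_sevenths_iff u⟩
end

section
/- For all c₁, c₂ ∈ [0,1] with c₁ + c₂ = 1 and all u ∈ [0,1], the generic Braess cost ratio satisfies ρ(c₁, c₂, u) = 4(c₁ + c₂·u) / (2 + c₁ + 2·c₂·u) ≤ 4/3, with equality if and only if c₂·(2 − u) = 0. -/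
/-!
Eliminating `c₁ = 1 - c₂` gives `4/3 - ρ = 4 c₂ (2 - u) / (3 (2 + c₁ + 2 c₂ u))`, whose
denominator is positive on the parameter range and whose numerator is nonnegative and
vanishes exactly when `c₂ (2 - u) = 0`.
-/

noncomputable section

def braessRatio (c₁ c₂ u : ℝ) : ℝ := 4 * (c₁ + c₂ * u) / (2 + c₁ + 2 * c₂ * u)

variable {c₁ c₂ u : ℝ}

lemma braess_denominator_pos (hc₂ : c₂ ∈ Set.Icc (0 : ℝ) 1) (hsum : c₁ + c₂ = 1)
    (hu : 0 ≤ u) : 0 < 2 + c₁ + 2 * c₂ * u := by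
  have hc₁ : 0 ≤ c₁ := by linarith [hc₂.2]
  have hc₂u : 0 ≤ c₂ * u := mul_nonneg hc₂.1 hu
  linarith

lemma four_thirds_sub_braessRatio (hsum : c₁ + c₂ = 1) (hD : 2 + c₁ + 2 * c₂ * u ≠ 0) :
    4 / 3 - braessRatio c₁ c₂ u = 4 * (c₂ * (2 - u)) / (3 * (2 + c₁ + 2 * c₂ * u)) := by
  rw [braessRatio, div_sub_div _ _ three_ne_zero hD]
  congr 1
  linear_combination (-8 : ℝ) * hsum

lemma braessRatio_le_four_thirds (hc₂ : 0 ≤ c₂) (hu : u ≤ 2) (hsum : c₁ + c₂ = 1)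
    (hD : 0 < 2 + c₁ + 2 * c₂ * u) : braessRatio c₁ c₂ u ≤ 4 / 3 := by
  rw [← sub_nonneg, four_thirds_sub_braessRatio hsum hD.ne']
  have : 0 ≤ c₂ * (2 - u) := mul_nonneg hc₂ (by linarith)
  positivity

lemma braessRatio_eq_four_thirds_iff (hsum : c₁ + c₂ = 1) (hD : 2 + c₁ + 2 * c₂ * u ≠ 0) :
    braessRatio c₁ c₂ u = 4 / 3 ↔ c₂ * (2 - u) = 0 := by
  rw [eq_comm, ← sub_eq_zero, four_thirds_sub_braessRatio hsum hD]
  simp [hD]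

end

theorem generic_braess_ratio_le_general (c₁ c₂ u : ℝ)
    (hc₂ : c₂ ∈ Set.Icc (0 : ℝ) 1)
    (hsum : c₁ + c₂ = 1) (hu : u ∈ Set.Icc (0 : ℝ) 1) :
    4 * (c₁ + c₂ * u) / (2 + c₁ + 2 * c₂ * u) ≤ 4 / 3 ∧
    (4 * (c₁ + c₂ * u) / (2 + c₁ + 2 * c₂ * u) = 4 / 3 ↔ c₂ * (2 - u) = 0) := by
  have hD := braess_denominator_pos hc₂ hsum hu.1
  exact ⟨braessRatio_le_four_thirds hc₂.1 (by linarith [hu.2]) hsum hD,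
    braessRatio_eq_four_thirds_iff hsum hD.ne'⟩

/-- For all `c₁, c₂ ∈ [0,1]` with `c₁ + c₂ = 1` and all `u ∈ [0,1]`, the generic Braess
cost ratio satisfies `4(c₁ + c₂·u)/(2 + c₁ + 2·c₂·u) ≤ 4/3`, with equality if and only
if `c₂·(2 − u) = 0`. -/
theorem generic_braess_ratio_le (c₁ c₂ u : ℝ)
    (hc₁ : c₁ ∈ Set.Icc (0 : ℝ) 1) (hc₂ : c₂ ∈ Set.Icc (0 : ℝ) 1)
    (hsum : c₁ + c₂ = 1) (hu : u ∈ Set.Icc (0 : ℝ) 1) :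
    4 * (c₁ + c₂ * u) / (2 + c₁ + 2 * c₂ * u) ≤ 4 / 3 ∧
    (4 * (c₁ + c₂ * u) / (2 + c₁ + 2 * c₂ * u) = 4 / 3 ↔ c₂ * (2 - u) = 0) :=
  generic_braess_ratio_le_general c₁ c₂ u hc₂ hsum hu
end

section
/- In an atomic selfish routing instance with pricing in which every congestion cost c_e(x) = a_e·x + b_e is affine with a_e ≥ 0 and every demand r_i > 0, let P be an equilibrium profile and P* any other strategy profile. Then SC(P) ≤ SC(P*) + Σ_{e∈E} a_e · f_e(P) · f_e(P*). -/
/-!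
Atomic selfish routing with pricing.  Edges form a finite type `E`; there are `k`
players, player `i` has demand `r i > 0` and a finite nonempty set `Paths i` of paths
(finite subsets of `E`).  Edge `e` has affine congestion cost `c_e(x) = a e * x + b e`
and per-unit price function `u e : ℝ → ℝ`.
-/

open Finset

/-- The social cost `SC(P) = Σ_{i=1}^k r_i · t_i(P)`. -/
noncomputable def socialCost {E : Type*} [Fintype E] [DecidableEq E] {k : ℕ}
    (a b : E → ℝ) (u : E → ℝ → ℝ) (r : Fin k → ℝ) (P : Fin k → Finset E) : ℝ :=
  ∑ i, r i * playerCost a b u r P i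

/-!
When player `i` alone deviates from the equilibrium `P` to its path `P*ᵢ`, the flow on each
edge `e ∈ P*ᵢ` grows by at most `rᵢ ≤ f_e(P*)`, so the equilibrium condition gives
`tᵢ(P) ≤ tᵢ(P*) + Σ_{e ∈ P*ᵢ} a_e f_e(P)`. Weighting by `rᵢ` and summing over the players
turns the last sum into `Σ_e a_e f_e(P) f_e(P*)`.
-/

section Routing

variable {E : Type*} [Fintype E] [DecidableEq E] {k : ℕ}

theorem le_edgeFlow_of_mem {r : Fin k → ℝ} (hr : ∀ j, 0 ≤ r j) {P : Fin k → Finset E}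
    {i : Fin k} {e : E} (he : e ∈ P i) : r i ≤ edgeFlow r P e := by
  have hterm : ∀ j ∈ univ, 0 ≤ if e ∈ P j then r j else 0 := fun j _ => by
    split_ifs <;> simp [hr j]
  simpa [edgeFlow, he] using single_le_sum hterm (mem_univ i)

theorem edgeFlow_update_le {r : Fin k → ℝ} {i : Fin k} (hri : 0 ≤ r i)
    (P : Fin k → Finset E) (Q : Finset E) (e : E) :
    edgeFlow r (Function.update P i Q) e ≤ edgeFlow r P e + r i := by
  have hterm : ∀ j ∈ univ, (if e ∈ Function.update P i Q j then r j else 0) ≤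
      (if e ∈ P j then r j else 0) + if j = i then r i else 0 := fun j _ => by
    rcases eq_or_ne j i with rfl | hji
    · simp only [Function.update_self, if_true]
      split_ifs <;> simp [hri]
    · simp [hji]
  simpa [edgeFlow, sum_add_distrib] using sum_le_sum hterm

theorem sum_mul_sum_eq_sum_mul_edgeFlow (r : Fin k → ℝ) (P : Fin k → Finset E)
    (g : E → ℝ) :
    ∑ i, r i * ∑ e ∈ P i, g e = ∑ e, g e * edgeFlow r P e := by
  simp_rw [edgeFlow, mul_sum, mul_ite, mul_zero]
  rw [sum_comm]
  simp_rw [sum_ite_mem, univ_inter, mul_comm]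

theorem playerCost_update_le {a : E → ℝ} (ha : ∀ e, 0 ≤ a e) (b : E → ℝ)
    (u : E → ℝ → ℝ) {r : Fin k → ℝ} (hr : ∀ j, 0 ≤ r j) (P Pstar : Fin k → Finset E)
    (i : Fin k) :
    playerCost a b u r (Function.update P i (Pstar i)) i ≤
      playerCost a b u r Pstar i + ∑ e ∈ Pstar i, a e * edgeFlow r P e := by
  rw [playerCost, playerCost, Function.update_self, ← sum_add_distrib]
  refine sum_le_sum fun e he => ?_
  have hflow : edgeFlow r (Function.update P i (Pstar i)) e ≤
      edgeFlow r P e + edgeFlow r Pstar e :=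
    (edgeFlow_update_le (hr i) P (Pstar i) e).trans
      (add_le_add_right (le_edgeFlow_of_mem hr he) _)
  linarith [mul_le_mul_of_nonneg_left hflow (ha e)]

end Routing

theorem equilibrium_socialCost_le_general {E : Type*} [Fintype E] [DecidableEq E] {k : ℕ}
    (a b : E → ℝ) (u : E → ℝ → ℝ) (r : Fin k → ℝ)
    (ha : ∀ e, 0 ≤ a e) (hr : ∀ i, 0 < r i)
    (Paths : Fin k → Finset (Finset E))
    (P Pstar : Fin k → Finset E)
    (hPstar : ∀ i, Pstar i ∈ Paths i)
    (heq : IsEquilibrium a b u r Paths P) :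
    socialCost a b u r P ≤
      socialCost a b u r Pstar + ∑ e, a e * edgeFlow r P e * edgeFlow r Pstar e := by
  have hr' : ∀ i, 0 ≤ r i := fun i => (hr i).le
  calc socialCost a b u r P
      ≤ ∑ i, r i * (playerCost a b u r Pstar i + ∑ e ∈ Pstar i, a e * edgeFlow r P e) :=
        sum_le_sum fun i _ => mul_le_mul_of_nonneg_left
          ((heq i _ (hPstar i)).trans (playerCost_update_le ha b u hr' P Pstar i)) (hr' i)
    _ = socialCost a b u r Pstar + ∑ e, a e * edgeFlow r P e * edgeFlow r Pstar e := by
        simp_rw [mul_add, sum_add_distrib, sum_mul_sum_eq_sum_mul_edgeFlow, socialCost]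

/-- If every congestion cost is affine with `a e ≥ 0` and every demand is positive, then
for an equilibrium profile `P` and any other strategy profile `P*`,
`SC(P) ≤ SC(P*) + Σ_{e∈E} a_e · f_e(P) · f_e(P*)`. -/
theorem equilibrium_socialCost_le {E : Type*} [Fintype E] [DecidableEq E] {k : ℕ}
    (a b : E → ℝ) (u : E → ℝ → ℝ) (r : Fin k → ℝ)
    (ha : ∀ e, 0 ≤ a e) (hr : ∀ i, 0 < r i)
    (Paths : Fin k → Finset (Finset E))
    (P Pstar : Fin k → Finset E)
    (hP : ∀ i, P i ∈ Paths i) (hPstar : ∀ i, Pstar i ∈ Paths i)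
    (heq : IsEquilibrium a b u r Paths P) :
    socialCost a b u r P ≤
      socialCost a b u r Pstar + ∑ e, a e * edgeFlow r P e * edgeFlow r Pstar e :=
  equilibrium_socialCost_le_general a b u r ha hr Paths P Pstar hPstar heq
end
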